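/- arXiv:1103.2992 — 4 statements merged into one kernel-verified Lean document; each statement's English description precedes it below -/
import Mathlib

section
/- Let F be the free group of rank r ≥ 2 with basis A = {a_1, ..., a_r}, let 1 ≤ l ≤ r-1, and let F̂ denote the subgroup of F generated by {a_1, ..., a_l} (which is free of rank l with basis {a_1, ..., a_l}). If S = {x_1, ..., x_k} is a subset of F̂ that can be extended to a free basis of F, then S can be extended to a free basis of F̂. -/
/-- The subgroup of the free group on `Fin r` generated by the first `l` generators. -/
def hatSubgroup (r l : ℕ) : Subgroup (FreeGroup (Fin r)) :=
  Subgroup.closure (FreeGroup.of '' {i : Fin r | (i : ℕ) < l})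

/-- A subset `B` of a group `G` is a free basis if the canonical homomorphism from the
free group on `B` to `G` is an isomorphism. -/
def IsFreeBasis {G : Type*} [Group G] (B : Set G) : Prop :=
  Function.Bijective (FreeGroup.lift (Subtype.val : B → G))

/-!
The statement holds for every subgroup `H` of a free group `G` with basis `B`: some free basis
of `H` contains every element of `B` that lies in `H`. This is the Nielsen–Schreier argument with
the generators kept track of. The action groupoid of `G` on `G ⧸ H` is free on the Schreier graph
whose edges are labelled by `B`, and the vertex group at the coset `H` is `H` itself; choosing a
spanning tree, it is free on the loops through the edges outside the tree. An element `b ∈ B ∩ H`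
labels a self-loop at the root, which lies in no tree, and its loop is `b` itself.
-/

open Function Set CategoryTheory CategoryTheory.ActionCategory CategoryTheory.SingleObj Quiver

universe u

namespace FreeGroupBasis

variable {ι G H : Type*} [Group G] [Group H]

theorem existsUnique_lift (β : FreeGroupBasis ι G) (f : ι → H) :
    ∃! F : G →* H, ∀ i, F (β i) = f i := by
  have h := β.lift.symm.bijective.existsUnique f
  simp only [funext_iff] at h
  exact h

theorem lift_bijective (β : FreeGroupBasis ι G) : Bijective (FreeGroup.lift β) := by
  have : FreeGroup.lift β = β.repr.symm.toMonoidHom := FreeGroup.ext_hom _ _ fun _ => FreeGroup.lift_apply_of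
  rw [this]
  exact β.repr.symm.bijective

noncomputable def ofIsFreeBasis {B : Set G} (hB : IsFreeBasis B) : FreeGroupBasis B G :=
  ofRepr (MulEquiv.ofBijective _ hB).symm

@[simp]
theorem ofIsFreeBasis_apply {B : Set G} (hB : IsFreeBasis B) (b : B) :
    ofIsFreeBasis hB b = b :=
  FreeGroup.lift_apply_of

theorem isFreeBasis_range (β : FreeGroupBasis ι G) : IsFreeBasis (range β) := by
  have hval : (Subtype.val : range β → G) = β.reindex (Equiv.ofInjective β β.injective) := by
    ext x
    simp [Equiv.apply_ofInjective_symm]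
  unfold IsFreeBasis
  rw [hval]
  exact lift_bijective _

theorem ofUniqueLift_apply {G X : Type u} [Group G] (of : X → G)
    (h : ∀ {H : Type u} [Group H] (f : X → H), ∃! F : G →* H, ∀ a, F (of a) = f a) (x : X) :
    ofUniqueLift X of h x = of x :=
  FreeGroup.lift_apply_of

end FreeGroupBasis

/-- Mathlib's `IsFreeGroupoid.actionGroupoidIsFree`, but with generating arrows labelled by the
given basis `β` rather than by the arbitrarily chosen `IsFreeGroup.Generators G`. -/
abbrev FreeGroupBasis.actionGroupoidIsFree {ι G : Type u} [Group G] (β : FreeGroupBasis ι G)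
    (A : Type u) [MulAction G A] : IsFreeGroupoid (ActionCategory G A) where
  quiverGenerators := ⟨fun a b => { i : ι // β i • a.back = b.back }⟩
  of := fun (e : Subtype _) => ⟨β e, e.property⟩
  unique_lift := by
    intro X _ f
    let f' : ι → (A → X) ⋊[mulAutArrow] G := fun i =>
      ⟨fun b => @f ⟨(), _⟩ ⟨(), b⟩ ⟨i, smul_inv_smul _ b⟩, β i⟩
    obtain ⟨F', hF', uF'⟩ := β.existsUnique_lift f'
    refine ⟨uncurry F' ?_, ?_, ?_⟩
    · suffices SemidirectProduct.rightHom.comp F' = MonoidHom.id _ from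
        DFunLike.ext_iff.mp this
      refine β.ext_hom _ _ fun i => ?_
      rw [MonoidHom.comp_apply, hF']
      rfl
    · rintro ⟨⟨⟩, a : A⟩ ⟨⟨⟩, b⟩ ⟨i, h : β i • a = b⟩
      change (F' (β _)).left _ = _
      rw [hF']
      cases inv_smul_eq_iff.mpr h.symm
      rfl
    · intro E hE
      have : curry E = F' := by
        refine uF' _ fun i => ?_
        ext
        · convert! hE _ _ _
          rfl
        · rfl
      apply Functor.hext
      · intro
        apply Unit.ext
      · refine ActionCategory.cases fun _ _ => ?_
        subst this
        rfl

theorem Quiver.not_mem_wideSubquiverSymmetrify_root {V : Type*} [Quiver V]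
    (T : WideSubquiver (Symmetrify V)) [Arborescence T] (e : @Quiver.Hom V _ (root T) (root T)) :
    e ∉ wideSubquiverSymmetrify T (root T) (root T) := by
  suffices ∀ loop : @Quiver.Hom (WideSubquiver.toType _ T) _ (root T) (root T), False by
    rintro (h | h)
    exacts [this ⟨Sum.inl e, h⟩, this ⟨Sum.inr e, h⟩]
  exact fun loop => Path.nil_ne_cons Path.nil loop (Subsingleton.elim _ _)

namespace IsFreeGroupoid.SpanningTree

variable {G : Type u} [Groupoid.{u} G] [IsFreeGroupoid G]
  (T : WideSubquiver (Symmetrify <| Generators G)) [Arborescence T]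

abbrev treeRoot : G := root T

abbrev cotree : Set (Total (Generators G)) :=
  (wideSubquiverEquivSetTotal <| wideSubquiverSymmetrify T)ᶜ

theorem loopOfHom_root (p : End (treeRoot T)) : loopOfHom T p = p := by
  suffices ∀ {a : G} (t q : a ⟶ a), t = 𝟙 a → t ≫ q ≫ inv t = q from this _ _ (treeHom_root T)
  rintro a t q rfl
  simp

variable {T} in
theorem map_loopOfHom {X : Type u} [Group X] (F : G ⥤ CategoryTheory.SingleObj X)
    (hF : ∀ a b (e : a ⟶ b), e ∈ wideSubquiverSymmetrify T a b → F.map (of e) = 1)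
    {x y : G} (q : x ⟶ y) : F.map (loopOfHom T q) = F.map q := by
  suffices ∀ {a} (p : Path (root T) a), F.map (homOfPath T p) = 1 by
    simp only [this (a := x), this (a := y), treeHom, comp_as_mul, inv_as_inv, loopOfHom, inv_one,
      mul_one, one_mul, Functor.map_inv, Functor.map_comp]
  intro a p
  induction p with
  | nil => exact F.map_id _
  | cons p e ih =>
    change F.map (homOfPath T p ≫ _) = 1
    refine (F.map_comp _ _).trans ?_
    change F.map _ * F.map (homOfPath T p) = 1
    rw [ih, mul_one]
    rcases e with ⟨e | e, eT⟩
    · exact hF _ _ e (Or.inl eT)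
    · refine (@Functor.map_inv _ _ _ _ F _ _ (of (G := G) e) (IsIso.of_groupoid _)).trans ?_
      rw [inv_as_inv, inv_eq_one]
      exact hF _ _ e (Or.inr eT)

open scoped Classical in
/-- The universal property behind Mathlib's `endIsFree`, which does not retain the basis. -/
theorem existsUnique_lift_end {X : Type u} [Group X] (f : cotree T → X) :
    ∃! F : End (treeRoot T) →* X, ∀ e, F (loopOfHom T (of e.val.hom)) = f e := by
  let f' : Labelling (Generators G) X := fun a b e =>
    if h : e ∈ wideSubquiverSymmetrify T a b then 1 else f ⟨⟨a, b, e⟩, h⟩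
  obtain ⟨F', hF', uF'⟩ := unique_lift f'
  have htree : ∀ a b (e : a ⟶ b), e ∈ wideSubquiverSymmetrify T a b → F'.map (of e) = 1 :=
    fun a b e h => (hF' a b e).trans (dif_pos h)
  refine ⟨F'.mapEnd _, fun ⟨⟨a, b, e⟩, h⟩ => ?_, fun E hE => ?_⟩
  · erw [Functor.mapEnd_apply, map_loopOfHom F' htree, hF']
    exact dif_neg h
  · have hE' : functorOfMonoidHom T E = F' := by
      refine uF' _ fun a b e => ?_
      change E (loopOfHom T _) = dite _ _ _
      split_ifs with h
      · rw [loopOfHom_eq_id T e h]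
        exact E.map_one
      · exact hE ⟨⟨a, b, e⟩, h⟩
    ext x
    have key : E (loopOfHom T x) = F'.map x := by rw [← hE']; rfl
    rwa [loopOfHom_root] at key

noncomputable def endBasis : FreeGroupBasis (cotree T) (End (treeRoot T)) :=
  FreeGroupBasis.ofUniqueLift _ _ (existsUnique_lift_end T)

theorem endBasis_apply (e : cotree T) : endBasis T e = loopOfHom T (of e.val.hom) :=
  FreeGroupBasis.ofUniqueLift_apply _ _ _

end IsFreeGroupoid.SpanningTree

open IsFreeGroupoid SpanningTree in
theorem FreeGroupBasis.exists_subgroup_basis_extending {ι G : Type u} [Group G]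
    (β : FreeGroupBasis ι G) (H : Subgroup G) :
    ∃ (κ : Type u) (b : FreeGroupBasis κ H), ∀ i (hi : β i ∈ H), (⟨β i, hi⟩ : H) ∈ range b := by
  let := β.actionGroupoidIsFree (G ⧸ H)
  let r₀ : ActionCategory G (G ⧸ H) := objEquiv G (G ⧸ H) ↑(1 : G)
  let : RootedConnected (show Symmetrify (Generators (ActionCategory G (G ⧸ H))) from r₀) :=
    @generators_connected _ _ (inferInstanceAs (IsConnected (ActionCategory G (G ⧸ H)))) _ r₀
  let T : WideSubquiver (Symmetrify <| Generators (ActionCategory G (G ⧸ H))) :=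
    geodesicSubtree (show Symmetrify (Generators (ActionCategory G (G ⧸ H))) from r₀)
  let : Arborescence T := geodesicArborescence _
  refine ⟨_, (endBasis T).map (endMulEquivSubgroup H), fun i hi => ?_⟩
  have hfix : β i • r₀.back = r₀.back := by
    show ((β i * 1 : G) : G ⧸ H) = ((1 : G) : G ⧸ H)
    rw [QuotientGroup.eq]
    simpa using hi
  let e : @Quiver.Hom (Generators (ActionCategory G (G ⧸ H))) _ r₀ r₀ := ⟨i, hfix⟩
  let e' : cotree T := ⟨⟨r₀, r₀, e⟩, Quiver.not_mem_wideSubquiverSymmetrify_root T e⟩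
  have hloop : endBasis T e' = of (G := ActionCategory G (G ⧸ H)) e :=
    (endBasis_apply T e').trans (loopOfHom_root T _)
  refine ⟨e', ?_⟩
  show endMulEquivSubgroup H (endBasis T e') = _
  rw [hloop]
  rfl

theorem IsFreeBasis.exists_subgroup_extending {G : Type u} [Group G] {B : Set G}
    (hB : IsFreeBasis B) (H : Subgroup G) :
    ∃ C : Set H, IsFreeBasis C ∧ ∀ g ∈ B, ∀ hg : g ∈ H, (⟨g, hg⟩ : H) ∈ C := by
  obtain ⟨κ, b, hb⟩ := (FreeGroupBasis.ofIsFreeBasis hB).exists_subgroup_basis_extending H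
  refine ⟨range b, b.isFreeBasis_range, fun g hgB hgH => ?_⟩
  simpa using hb ⟨g, hgB⟩ (by simpa using hgH)

theorem stmt0_general (r l k : ℕ)
    (x : Fin k → FreeGroup (Fin r)) (hx : ∀ i, x i ∈ hatSubgroup r l)
    (hprim : ∃ B : Set (FreeGroup (Fin r)), IsFreeBasis B ∧ Set.range x ⊆ B) :
    ∃ B : Set (hatSubgroup r l),
      IsFreeBasis B ∧ (Set.range fun i => (⟨x i, hx i⟩ : hatSubgroup r l)) ⊆ B := by
  obtain ⟨B₀, hB₀, hxB₀⟩ := hprim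
  obtain ⟨C, hC, hB₀C⟩ := hB₀.exists_subgroup_extending (hatSubgroup r l)
  refine ⟨C, hC, ?_⟩
  rintro _ ⟨i, rfl⟩
  exact hB₀C (x i) (hxB₀ ⟨i, rfl⟩) (hx i)

theorem stmt0 (r l k : ℕ) (hr : 2 ≤ r) (hl : 1 ≤ l) (hlr : l ≤ r - 1)
    (x : Fin k → FreeGroup (Fin r)) (hx : ∀ i, x i ∈ hatSubgroup r l)
    (hprim : ∃ B : Set (FreeGroup (Fin r)), IsFreeBasis B ∧ Set.range x ⊆ B) :
    ∃ B : Set (hatSubgroup r l),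
      IsFreeBasis B ∧ (Set.range fun i => (⟨x i, hx i⟩ : hatSubgroup r l)) ⊆ B :=
  stmt0_general r l k x hx hprim
end

section
/- Let n > 0, let F be the free group of rank r ≥ 2 with basis {a_1, ..., a_r}, let 1 ≤ l ≤ r-1, and let F̂ be the subgroup generated by {a_1, ..., a_l}. Let F'F^n denote the (normal) subgroup of F generated by the commutator subgroup F' together with all n-th powers, and similarly F̂'F̂^n in F̂, so that F/F'F^n ≅ (ℤ/nℤ)^r and F̂/F̂'F̂^n ≅ (ℤ/nℤ)^l. If S = {x_1, ..., x_k} ⊆ F̂ is such that the image of S in F/F'F^n extends to a basis of the free ℤ/nℤ-module F/F'F^n, then the image of S in F̂/F̂'F̂^n extends to a basis of the free ℤ/nℤ-module F̂/F̂'F̂^n. -/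
open scoped commutatorElement

/-- `G'G^n`: the normal subgroup of `G` generated by all commutators together with all
`n`-th powers. -/
def expSub (n : ℕ) (G : Type*) [Group G] : Subgroup G :=
  Subgroup.normalClosure ({y | ∃ a b : G, y = ⁅a, b⁆} ∪ {y | ∃ g : G, y = g ^ n})

instance expSub_normal (n : ℕ) (G : Type*) [Group G] : (expSub n G).Normal :=
  Subgroup.normalClosure_normal

/-- The quotient `G/G'G^n`, the free abelian group of exponent `n` when `G` is free. -/
abbrev ExpQuot (n : ℕ) (G : Type*) [Group G] := G ⧸ expSub n G

instance ExpQuot.commGroup (n : ℕ) (G : Type*) [Group G] : CommGroup (ExpQuot n G) where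
  mul_comm := by
    intro a b
    induction a using QuotientGroup.induction_on with
    | H x =>
    induction b using QuotientGroup.induction_on with
    | H y =>
    rw [← QuotientGroup.mk_mul, ← QuotientGroup.mk_mul, QuotientGroup.eq]
    have : (x * y)⁻¹ * (y * x) = ⁅y⁻¹, x⁻¹⁆ := by
      group
    rw [this]
    exact Subgroup.subset_normalClosure (Or.inl ⟨_, _, rfl⟩)

instance ExpQuot.zmodModule (n : ℕ) (G : Type*) [Group G] :
    Module (ZMod n) (Additive (ExpQuot n G)) :=
  AddCommGroup.zmodModule (by
    intro a
    induction a using QuotientGroup.induction_on with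
    | H x =>
    have h1 : (QuotientGroup.mk (x ^ n) : ExpQuot n G) = 1 := by
      rw [← QuotientGroup.mk_one, QuotientGroup.eq]
      exact Subgroup.subset_normalClosure (Or.inr ⟨x⁻¹, by group⟩)
    show Additive.ofMul ((QuotientGroup.mk x : ExpQuot n G) ^ n) = 0
    rw [← QuotientGroup.mk_pow, h1]
    rfl)

/-- The image of `g` in `G/G'G^n`, viewed additively (a `ℤ/nℤ`-module element). -/
def expImage (n : ℕ) {G : Type*} [Group G] (g : G) : Additive (ExpQuot n G) :=
  Additive.ofMul (QuotientGroup.mk g : ExpQuot n G)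

/-!
The inclusion `F̂ → F` has a retraction (send `aᵢ` to `1` for `i > l`), so it induces an injective
`ℤ/nℤ`-linear map `F̂/F̂'F̂ⁿ → F/F'Fⁿ`. The image of `S` in `F̂/F̂'F̂ⁿ` is therefore linearly
independent, as it is mapped into a basis of `F/F'Fⁿ`, and it remains to see that over `ℤ/nℤ` a
linearly independent subset of a finite free module extends to a basis.

This is done one vector `u` at a time. Modulo the span of the basis vectors `c j`, `j ∈ J`, already
chosen, `u` has trivial annihilator, so for each prime `p ∣ n` some coordinate of `u` outside `J`
is nonzero mod `p`. Since `ℤ/nℤ` has stable range one, some combination of these coordinates is a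
unit, and a single dilatransvection then fixes the `c j`, `j ∈ J`, and moves another basis vector
to `u`.
-/

open Module Set

theorem Module.Basis.exists_eqOn_of_isUnit {ι R M : Type*} [Ring R] [AddCommGroup M] [Module R M]
    (c : Basis ι R M) (f : Dual R M) {J : Set ι} (hJ : ∀ j ∈ J, f (c j) = 0) {i₀ : ι}
    (hi₀ : f (c i₀) = 1) {u : M} (hu : IsUnit (f u)) :
    ∃ c' : Basis ι R M, EqOn c' c J ∧ c' i₀ = u := by
  have h : IsUnit (1 + f (u - c i₀)) := by rwa [map_sub, hi₀, add_sub_cancel]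
  refine ⟨c.map (LinearEquiv.dilatransvection h), fun j hj => ?_, ?_⟩ <;>
    simp only [map_apply, LinearEquiv.dilatransvection.apply]
  · rw [hJ j hj, zero_smul, add_zero]
  · rw [hi₀, one_smul, add_sub_cancel]

namespace ZMod

variable {n : ℕ} [NeZero n]

theorem isUnit_iff_forall_prime_cast_ne_zero (x : ZMod n) :
    IsUnit x ↔ ∀ p, p.Prime → p ∣ n → (x.cast : ZMod p) ≠ 0 := by
  rw [← natCast_zmod_val x, isUnit_iff_coprime, natCast_zmod_val]
  simp only [cast_eq_val, ne_eq, natCast_eq_zero_iff]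
  rw [← not_iff_not, Nat.Prime.not_coprime_iff_dvd]
  push Not
  exact exists_congr fun p => by tauto

theorem natCast_div_mul_eq_zero_of_cast_eq_zero {p : ℕ} (hpn : p ∣ n) {x : ZMod n}
    (hx : (x.cast : ZMod p) = 0) : ((n / p : ℕ) : ZMod n) * x = 0 := by
  rw [cast_eq_val, natCast_eq_zero_iff] at hx
  obtain ⟨m, hm⟩ := hx
  rw [← natCast_zmod_val x, ← Nat.cast_mul, natCast_eq_zero_iff, hm, ← mul_assoc,
    Nat.div_mul_cancel hpn]
  exact dvd_mul_right n m

theorem natCast_div_prime_ne_zero {p : ℕ} (hp : p.Prime) (hpn : p ∣ n) :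
    ((n / p : ℕ) : ZMod n) ≠ 0 := by
  have hn := NeZero.pos n
  rw [Ne, natCast_eq_zero_iff]
  exact fun h => (Nat.div_lt_self hn hp.one_lt).not_ge
    (Nat.le_of_dvd (Nat.div_pos (Nat.le_of_dvd hn hpn) hp.pos) h)

/-- Stable range one: the coefficient of `b p` vanishes modulo every prime factor of `n`
except `p`. -/
theorem isUnit_add_sum_prod_erase_mul (a : ZMod n) (b : ℕ → ZMod n)
    (hb : ∀ p, p.Prime → p ∣ n → (a.cast : ZMod p) = 0 → ((b p).cast : ZMod p) ≠ 0) :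
    IsUnit (a + ∑ p ∈ n.primeFactors with (a.cast : ZMod p) = 0,
      (∏ q ∈ n.primeFactors.erase p, (q : ZMod n)) * b p) := by
  rw [isUnit_iff_forall_prime_cast_ne_zero]
  intro q hq hqn
  have := Fact.mk hq
  let φ := castHom hqn (ZMod q)
  have hcast : ∀ x : ZMod n, (x.cast : ZMod q) = φ x := fun x => (castHom_apply x).symm
  have hqP : q ∈ n.primeFactors := Nat.mem_primeFactors.2 ⟨hq, hqn, NeZero.ne n⟩
  have hφ_ne : ∀ p ≠ q, φ ((∏ r ∈ n.primeFactors.erase p, (r : ZMod n)) * b p) = 0 :=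
    fun p hpq => by
      rw [map_mul, map_prod, Finset.prod_eq_zero (Finset.mem_erase.2 ⟨hpq.symm, hqP⟩) (by simp),
        zero_mul]
  have hφ_eq : φ (∏ r ∈ n.primeFactors.erase q, (r : ZMod n)) ≠ 0 := by
    rw [map_prod, Finset.prod_ne_zero_iff]
    intro r hr
    obtain ⟨hrq, hr⟩ := Finset.mem_erase.1 hr
    rw [map_natCast, Ne, natCast_eq_zero_iff,
      Nat.prime_dvd_prime_iff_eq hq (Nat.prime_of_mem_primeFactors hr)]
    exact hrq.symm
  rw [hcast, map_add, map_sum]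
  by_cases ha : (a.cast : ZMod q) = 0
  · have hqb : q ∈ n.primeFactors.filter fun p => (a.cast : ZMod p) = 0 :=
      Finset.mem_filter.2 ⟨hqP, ha⟩
    rw [Finset.sum_eq_single q (fun p _ => hφ_ne p) (absurd hqb), ← hcast, ha, zero_add, map_mul]
    exact mul_ne_zero hφ_eq (by rw [← hcast]; exact hb q hq hqn ha)
  · rw [Finset.sum_eq_zero fun p hp => hφ_ne p fun hpq => by
      subst hpq; exact ha (Finset.mem_filter.1 hp).2, add_zero, ← hcast]
    exact ha

variable {ι M : Type*} [AddCommGroup M] [Module (ZMod n) M]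

theorem exists_cast_repr_ne_zero (c : Basis ι (ZMod n) M) {J : Set ι} {u : M}
    (hu : ∀ e : ZMod n, e • u ∈ Submodule.span (ZMod n) (c '' J) → e = 0)
    {p : ℕ} (hp : p.Prime) (hpn : p ∣ n) : ∃ k ∉ J, ((c.repr u k).cast : ZMod p) ≠ 0 := by
  by_contra! h
  refine natCast_div_prime_ne_zero hp hpn (hu _ ?_)
  rw [Basis.mem_span_image]
  intro k hk
  by_contra hkJ
  simp [natCast_div_mul_eq_zero_of_cast_eq_zero hpn (h k hkJ)] at hk

theorem exists_dual_isUnit (c : Basis ι (ZMod n) M) {J : Set ι} {i₀ : ι} (hi₀ : i₀ ∉ J) {u : M}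
    (hu : ∀ p, p.Prime → p ∣ n → ∃ k ∉ J, ((c.repr u k).cast : ZMod p) ≠ 0) :
    ∃ f : Dual (ZMod n) M, (∀ j ∈ J, f (c j) = 0) ∧ f (c i₀) = 1 ∧ IsUnit (f u) := by
  classical
  have : Nonempty ι := ⟨i₀⟩
  choose! k hkJ hk using hu
  set a := c.repr u
  let bad := n.primeFactors.filter fun p => ((a i₀).cast : ZMod p) = 0
  have hbad : ∀ p ∈ bad, p.Prime ∧ p ∣ n ∧ ((a i₀).cast : ZMod p) = 0 := fun p hp => by
    simp only [bad, Finset.mem_filter, Nat.mem_primeFactors] at hp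
    exact ⟨hp.1.1, hp.1.2.1, hp.2⟩
  have hk₀ : ∀ p ∈ bad, k p ≠ i₀ := fun p hp h => by
    obtain ⟨hp, hpn, ha⟩ := hbad p hp
    exact hk p hp hpn (h ▸ ha)
  let f : Dual (ZMod n) M :=
    c.coord i₀ + ∑ p ∈ bad, (∏ q ∈ n.primeFactors.erase p, (q : ZMod n)) • c.coord (k p)
  refine ⟨f, fun j hj => ?_, ?_, ?_⟩
  · simpa [f, ne_of_mem_of_not_mem hj hi₀] using Finset.sum_eq_zero fun p hp => by
      simp [ne_of_mem_of_not_mem hj (hkJ p (hbad p hp).1 (hbad p hp).2.1)]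
  · simpa [f] using Finset.sum_eq_zero fun p hp => by simp [hk₀ p hp]
  · simpa [f, a] using isUnit_add_sum_prod_erase_mul (a i₀) (fun p => a (k p))
      fun p hp hpn _ => hk p hp hpn

theorem exists_basis_eqOn_and_mem_range [Fact (1 < n)] (c : Basis ι (ZMod n) M) {J : Set ι}
    {u : M} (hu : ∀ e : ZMod n, e • u ∈ Submodule.span (ZMod n) (c '' J) → e = 0) :
    ∃ c' : Basis ι (ZMod n) M, EqOn c' c J ∧ u ∈ range c' := by
  obtain ⟨p, hp, hpn⟩ := Nat.exists_prime_and_dvd (Fact.out : 1 < n).ne'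
  obtain ⟨i₀, hi₀, -⟩ := exists_cast_repr_ne_zero c hu hp hpn
  obtain ⟨f, hfJ, hfi₀, hfu⟩ :=
    exists_dual_isUnit c hi₀ fun q hq hqn => exists_cast_repr_ne_zero c hu hq hqn
  obtain ⟨c', hc'J, hc'i₀⟩ := c.exists_eqOn_of_isUnit f hfJ hfi₀ hfu
  exact ⟨c', hc'J, i₀, hc'i₀⟩

theorem exists_basis_superset_of_linearIndepOn [Fact (1 < n)] [Finite ι]
    (c : Basis ι (ZMod n) M) {s : Set M} (hs : LinearIndepOn (ZMod n) id s) :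
    ∃ b : Basis ι (ZMod n) M, s ⊆ range b := by
  have : Module.Finite (ZMod n) M := .of_basis c
  have : Finite M := Module.finite_of_finite (ZMod n)
  induction s, s.toFinite using Set.Finite.induction_on with
  | empty => exact ⟨c, empty_subset _⟩
  | @insert u s hus _ ih =>
    obtain ⟨b, hb⟩ := ih (hs.mono (subset_insert u s))
    have hbs : b '' (b ⁻¹' s) = s := image_preimage_eq_of_subset hb
    have hu : ∀ e : ZMod n, e • u ∈ Submodule.span (ZMod n) (b '' (b ⁻¹' s)) → e = 0 :=
      fun e he => hs.eq_zero_of_smul_mem_span (mem_insert u s) e (by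
        rwa [image_id, insert_sdiff_self_of_notMem hus, ← hbs])
    obtain ⟨b', hb'b, hub'⟩ := exists_basis_eqOn_and_mem_range b hu
    refine ⟨b', insert_subset hub' ?_⟩
    rw [← hbs, ← hb'b.image_eq]
    exact image_subset_range _ _

end ZMod

section ExpQuot

variable {n : ℕ} {G H : Type*} [Group G] [Group H]

theorem expImage_surjective : Function.Surjective (expImage n : G → Additive (ExpQuot n G)) :=
  fun x => QuotientGroup.mk_surjective x.toMul

theorem expSub_le_ker {A : Type*} [CommGroup A] (f : G →* A) (hA : ∀ a : A, a ^ n = 1) :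
    expSub n G ≤ f.ker := by
  refine Subgroup.normalClosure_le_normal ?_
  rintro _ (⟨a, b, rfl⟩ | ⟨g, rfl⟩)
  · simp [map_commutatorElement, commutatorElement_eq_one_iff_mul_comm, mul_comm]
  · simp [hA]

def expQuotLift {V : Type*} [AddCommGroup V] [Module (ZMod n) V] (f : G →* Multiplicative V) :
    Additive (ExpQuot n G) →ₗ[ZMod n] V :=
  (MonoidHom.toAdditiveLeft (QuotientGroup.lift _ f (expSub_le_ker f fun a =>
    Multiplicative.toAdd.injective (by simp [ZModModule.char_nsmul_eq_zero])))).toZModLinearMap n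

@[simp]
theorem expQuotLift_expImage {V : Type*} [AddCommGroup V] [Module (ZMod n) V]
    (f : G →* Multiplicative V) (g : G) : expQuotLift f (expImage n g) = (f g).toAdd :=
  rfl

def expQuotMap (f : G →* H) : Additive (ExpQuot n G) →ₗ[ZMod n] Additive (ExpQuot n H) :=
  expQuotLift ((QuotientGroup.mk' (expSub n H)).comp f)

@[simp]
theorem expQuotMap_expImage (f : G →* H) (g : G) :
    expQuotMap f (expImage n g) = expImage n (f g) :=
  rfl

theorem expQuotMap_comp_of_leftInverse {f : G →* H} {g : H →* G} (h : Function.LeftInverse g f) :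
    (expQuotMap g).comp (expQuotMap f) = (LinearMap.id : Additive (ExpQuot n G) →ₗ[ZMod n] _) := by
  ext x
  obtain ⟨y, rfl⟩ := expImage_surjective x
  simp [h y]

def expQuotEquiv (e : G ≃* H) : Additive (ExpQuot n G) ≃ₗ[ZMod n] Additive (ExpQuot n H) :=
  .ofLinearMap (expQuotMap e) (expQuotMap e.symm) (expQuotMap_comp_of_leftInverse e.right_inv)
    (expQuotMap_comp_of_leftInverse e.left_inv)

end ExpQuot

namespace FreeGroup

variable (n : ℕ) (α : Type*)

noncomputable def expQuotBasis : Basis α (ZMod n) (Additive (ExpQuot n (FreeGroup α))) :=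
  Basis.mk (v := fun a => expImage n (of a))
    (LinearIndependent.of_comp (expQuotLift (lift fun a => Multiplicative.ofAdd
        (Finsupp.single a (1 : ZMod n)))) <| by
      rw [show _ ∘ _ = fun a => Finsupp.single a (1 : ZMod n) from funext fun a => by simp]
      exact Finsupp.linearIndependent_single_one (ZMod n) α)
    (by
      rintro x -
      obtain ⟨w, rfl⟩ := expImage_surjective x
      induction w using FreeGroup.induction_on with
      | C1 => exact zero_mem _
      | of a => exact Submodule.subset_span ⟨a, rfl⟩
      | inv_of a h => exact neg_mem h
      | mul w₁ w₂ h₁ h₂ => exact add_mem h₁ h₂)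

variable {α}

theorem exists_leftInverse_map_subtypeVal (p : α → Prop) :
    ∃ ρ : FreeGroup α →* FreeGroup (Subtype p), Function.LeftInverse ρ (map Subtype.val) := by
  classical
  refine ⟨lift fun a => if h : p a then of ⟨a, h⟩ else 1, fun w => ?_⟩
  rw [← MonoidHom.comp_apply, ext_hom (MonoidHom.comp _ _) (MonoidHom.id _) fun a => by simp [a.2]]
  rfl

end FreeGroup

theorem hatSubgroup_eq_range (r l : ℕ) :
    hatSubgroup r l = (FreeGroup.map (Subtype.val : {i : Fin r // (i : ℕ) < l} → Fin r)).range := by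
  rw [FreeGroup.range_map, Subtype.range_coe_subtype]
  rfl

noncomputable def hatEquiv (r l : ℕ) : FreeGroup {i : Fin r // (i : ℕ) < l} ≃* hatSubgroup r l :=
  (MonoidHom.ofInjective (FreeGroup.map_injective Subtype.val_injective)).trans
    (MulEquiv.subgroupCongr (hatSubgroup_eq_range r l).symm)

theorem coe_hatEquiv (r l : ℕ) (w : FreeGroup {i : Fin r // (i : ℕ) < l}) :
    (hatEquiv r l w : FreeGroup (Fin r)) = FreeGroup.map Subtype.val w :=
  rfl

theorem exists_leftInverse_hatSubgroup_subtype (r l : ℕ) :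
    ∃ ρ : FreeGroup (Fin r) →* hatSubgroup r l,
      Function.LeftInverse ρ (hatSubgroup r l).subtype := by
  obtain ⟨ρ, hρ⟩ := FreeGroup.exists_leftInverse_map_subtypeVal fun i : Fin r => (i : ℕ) < l
  refine ⟨(hatEquiv r l).toMonoidHom.comp ρ, fun h => ?_⟩
  obtain ⟨w, rfl⟩ := (hatEquiv r l).surjective h
  simp [coe_hatEquiv, hρ w]

noncomputable def hatBasis (n r l : ℕ) :
    Basis {i : Fin r // (i : ℕ) < l} (ZMod n) (Additive (ExpQuot n (hatSubgroup r l))) :=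
  (FreeGroup.expQuotBasis n _).map (expQuotEquiv (hatEquiv r l))

theorem linearIndepOn_expImage_of_leftInverse {n : ℕ} [Fact (1 < n)] {G H κ : Type*} [Group G]
    [Group H] {f : H →* G} {ρ : G →* H} (hρ : Function.LeftInverse ρ f)
    (b : Basis κ (ZMod n) (Additive (ExpQuot n G))) {s : Set H}
    (hs : ∀ h ∈ s, expImage n (f h) ∈ range b) : LinearIndepOn (ZMod n) id (expImage n '' s) := by
  have hinj : Function.Injective (expQuotMap (n := n) f) :=
    Function.LeftInverse.injective (g := expQuotMap ρ)
      (LinearMap.congr_fun (expQuotMap_comp_of_leftInverse hρ))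
  refine LinearIndepOn.of_comp (expQuotMap f) ((linearIndepOn_iff_image hinj.injOn).2 ?_)
  refine ((linearIndepOn_id_range_iff b.injective).2 b.linearIndependent).mono ?_
  rintro _ ⟨_, ⟨h, hh, rfl⟩, rfl⟩
  exact hs h hh

theorem stmt2_general (n : ℕ) (hn : 0 < n) (r l k : ℕ)
    (x : Fin k → FreeGroup (Fin r)) (hx : ∀ i, x i ∈ hatSubgroup r l)
    (hprim : ∃ (ι : Type)
        (b : Module.Basis ι (ZMod n) (Additive (ExpQuot n (FreeGroup (Fin r))))),
      ∀ i, expImage n (x i) ∈ Set.range ⇑b) :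
    ∃ (ι : Type) (b : Module.Basis ι (ZMod n) (Additive (ExpQuot n (hatSubgroup r l)))),
      ∀ i, expImage n (⟨x i, hx i⟩ : hatSubgroup r l) ∈ Set.range ⇑b := by
  obtain ⟨ι, b, hb⟩ := hprim
  obtain rfl | hn1 := eq_or_ne n 1
  · have := Module.subsingleton (ZMod 1) (Additive (ExpQuot 1 (FreeGroup (Fin r))))
    have := Module.subsingleton (ZMod 1) (Additive (ExpQuot 1 (hatSubgroup r l)))
    exact ⟨ι, b.map (.ofSubsingleton _ _), fun i => (hb i).imp fun _ _ => Subsingleton.elim _ _⟩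
  have : NeZero n := ⟨hn.ne'⟩
  have : Fact (1 < n) := ⟨by omega⟩
  obtain ⟨ρ, hρ⟩ := exists_leftInverse_hatSubgroup_subtype r l
  obtain ⟨c, hc⟩ := ZMod.exists_basis_superset_of_linearIndepOn (hatBasis n r l)
    (linearIndepOn_expImage_of_leftInverse hρ b (s := range fun i => ⟨x i, hx i⟩)
      (by rintro _ ⟨i, rfl⟩; exact hb i))
  exact ⟨_, c, fun i => hc ⟨_, ⟨i, rfl⟩, rfl⟩⟩

theorem stmt2 (n : ℕ) (hn : 0 < n) (r l k : ℕ) (hr : 2 ≤ r) (hl : 1 ≤ l) (hlr : l ≤ r - 1)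
    (x : Fin k → FreeGroup (Fin r)) (hx : ∀ i, x i ∈ hatSubgroup r l)
    (hprim : ∃ (ι : Type)
        (b : Module.Basis ι (ZMod n) (Additive (ExpQuot n (FreeGroup (Fin r))))),
      ∀ i, expImage n (x i) ∈ Set.range ⇑b) :
    ∃ (ι : Type) (b : Module.Basis ι (ZMod n) (Additive (ExpQuot n (hatSubgroup r l)))),
      ∀ i, expImage n (⟨x i, hx i⟩ : hatSubgroup r l) ∈ Set.range ⇑b :=
  stmt2_general n hn r l k x hx hprim
end

section
/- Let F be the free group of rank r ≥ 2 with basis {a_1, ..., a_r}, let 1 ≤ l ≤ r-1, and let F̂ be the subgroup generated by {a_1, ..., a_l}. Fix t ≥ 1 and let γ_{t+1}(F) and γ_{t+1}(F̂) denote the (t+1)-st terms of the lower central series of F and F̂ respectively, so that F/γ_{t+1}(F) is the free nilpotent group of class t and rank r. If S = {x_1, ..., x_k} ⊆ F̂ is such that the image of S in F/γ_{t+1}(F) can be extended to a generating set of F/γ_{t+1}(F) of cardinality r (equivalently, to a basis), then the image of S in F̂/γ_{t+1}(F̂) can be extended to a generating set of F̂/γ_{t+1}(F̂) of cardinality l.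 -/
/-- The free nilpotent quotient `G/γ_{t+1}(G)` of class `t`.  Note that Mathlib's
`lowerCentralSeries G 0 = G = γ₁(G)`, so `γ_{t+1}(G) = lowerCentralSeries G t`. -/
abbrev NilpotentQuot (t : ℕ) (G : Type*) [Group G] := G ⧸ (⊤ : Subgroup G).lowerCentralSeries t

/-!
Abelianizing turns the image of `T` in `F/γ_{t+1}(F)` into a basis of `ℤ^r` that contains the
exponent-sum vectors of the `x_i`, and these vectors lie in `ℤ^l`. Over a PID, part of a basis
that lies in a submodule extends to a basis of that submodule (the rest of the basis cuts out a
complement), so the vectors of the `x_i` extend to a basis of `ℤ^l`, which has exactly `l`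
elements. Lifting the new vectors to `F̂/γ_{t+1}(F̂)` gives `l` elements that generate it modulo
commutators, and in a nilpotent group this already means that they generate. The images of the
`x_i` stay distinct because `F̂/γ_{t+1}(F̂) → F/γ_{t+1}(F)` is split by the retraction killing
`a_{l+1}, …, a_r`.
-/

section Nilpotent
open Subgroup
variable {G : Type*} [Group G]

theorem commutator_le_of_sup_center_eq_top {K : Subgroup G} (h : K ⊔ center G = ⊤) :
    commutator G ≤ K :=
  have : K.Normal := normalizer_eq_top_iff.mp <| top_le_iff.mp <|
    h ▸ sup_le le_normalizer (center_le_normalizer (K : Set G))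
  this.commutator_le_of_self_sup_commutative_eq_top h inferInstance

theorem map_commutator_of_surjective {H : Type*} [Group H] {f : G →* H}
    (hf : Function.Surjective f) : (commutator G).map f = commutator H := by
  rw [commutator_def, commutator_def, map_commutator, map_top_of_surjective f hf]

theorem eq_top_of_sup_commutator_eq_top [Group.IsNilpotent G] {K : Subgroup G}
    (h : K ⊔ commutator G = ⊤) : K = ⊤ := by
  refine Group.nilpotent_center_quotient_ind
    (P := fun G _ _ => ∀ K : Subgroup G, K ⊔ commutator G = ⊤ → K = ⊤) G
    (fun _ _ _ _ _ => Subsingleton.elim _ _) (fun G _ _ ih K h => ?_) K h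
  have hπ := QuotientGroup.mk'_surjective (center G)
  have hK : K ⊔ center G = ⊤ := by
    have hmap : K.map (QuotientGroup.mk' _) ⊔ commutator (G ⧸ center G) = ⊤ := by
      rw [← map_commutator_of_surjective hπ, ← Subgroup.map_sup, h,
        map_top_of_surjective _ hπ]
    rw [← QuotientGroup.ker_mk' (center G), ← comap_map_eq, ih _ hmap, comap_top]
  rwa [sup_eq_left.mpr (commutator_le_of_sup_center_eq_top hK)] at h

instance (G : Type*) [Group G] (t : ℕ) :
    Group.IsNilpotent (G ⧸ (⊤ : Subgroup G).lowerCentralSeries t) :=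
  Subgroup.nilpotent_iff_lowerCentralSeries.mpr ⟨t, by
    rw [← map_top_of_surjective _ (QuotientGroup.mk'_surjective _), ← map_lowerCentralSeries,
      QuotientGroup.map_mk'_self]⟩

end Nilpotent

section LinearAlgebra
open Submodule
variable {R M : Type*} [CommRing R] [IsDomain R] [IsPrincipalIdealRing R] [AddCommGroup M]
  [Module R M]

theorem exists_linearIndepOn_superset_span_eq {B₀ s : Finset M}
    (hind : LinearIndepOn R id (B₀ : Set M)) (hspan : span R (B₀ : Set M) = ⊤)
    (hs : s ⊆ B₀)
    {W : Submodule R M} (hsW : ↑s ⊆ (W : Set M)) :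
    ∃ B : Finset M, s ⊆ B ∧ LinearIndepOn R id (B : Set M) ∧ span R (B : Set M) = W := by
  classical
  have hli : LinearIndependent R (Subtype.val : ↥(B₀ : Set M) → M) := hind
  let b := Module.Basis.mk hli (by rw [Subtype.range_coe, hspan])
  replace hs : ↑s ⊆ Set.range b := by
    rw [Module.Basis.coe_mk, Subtype.range_coe]
    exact Finset.coe_subset.2 hs
  set J := b ⁻¹' s
  have hJ : b '' J = s := Set.image_preimage_eq_of_subset hs
  -- `U` is a complement of `span s` in `W`: the modular law gives `span s ⊔ U = W`, and the sum
  -- is direct because `s` and `b '' Jᶜ` are disjoint parts of the basis `b`.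
  set U := span R (b '' Jᶜ) ⊓ W
  obtain ⟨m, c⟩ := U.basisOfPid b
  have hUc : span R (Set.range (U.subtype ∘ c)) = U := by
    rw [Set.range_comp, ← map_span, c.span_eq, Submodule.map_top, range_subtype]
  refine ⟨s ∪ Finset.univ.image (U.subtype ∘ c), Finset.subset_union_left, ?_, ?_⟩ <;>
    rw [Finset.coe_union, Finset.coe_image, Finset.coe_univ, Set.image_univ]
  · refine (b.linearIndependent.linearIndepOn_id.mono hs).id_union
      ((c.linearIndependent.map' U.subtype (ker_subtype _)).linearIndepOn_id) ?_
    rw [hUc, ← hJ]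
    exact (b.linearIndependent.disjoint_span_image disjoint_compl_right).mono_right inf_le_left
  · rw [span_union, hUc, ← hJ, ← sup_inf_assoc_of_le _ (span_le.2 (hJ ▸ hsW)),
      ← span_union, ← Set.image_union, Set.union_compl_self, Set.image_univ, b.span_eq,
      top_inf_eq]

end LinearAlgebra

section AbelianImage
open Subgroup Multiplicative
variable {G M : Type*} [Group G] [AddCommGroup M] (f : G →* Multiplicative M)

theorem image_closure_eq_span (S : Set G) :
    toAdd ∘ f '' closure S = Submodule.span ℤ (toAdd ∘ f '' S) := by
  apply le_antisymm
  · rintro _ ⟨g, hg, rfl⟩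
    induction hg using closure_induction with
    | mem g hg => exact Submodule.subset_span ⟨g, hg, rfl⟩
    | one => simp
    | mul a b _ _ ha hb => simpa using add_mem ha hb
    | inv a _ ha => simpa using neg_mem ha
  · intro w hw
    induction hw using Submodule.span_induction with
    | mem w hw => obtain ⟨g, hg, rfl⟩ := hw; exact ⟨g, subset_closure hg, rfl⟩
    | zero => exact ⟨1, one_mem _, by simp⟩
    | add _ _ _ _ ha hb =>
      obtain ⟨g, hg, rfl⟩ := ha
      obtain ⟨h, hh, rfl⟩ := hb
      exact ⟨g * h, mul_mem hg hh, by simp⟩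
    | smul n _ _ hw =>
      obtain ⟨g, hg, rfl⟩ := hw
      exact ⟨g ^ n, zpow_mem hg n, by simp⟩

theorem range_eq_span_of_closure_eq_top {S : Set G} (hS : closure S = ⊤) :
    Set.range (toAdd ∘ f) = Submodule.span ℤ (toAdd ∘ f '' S) := by
  rw [← image_closure_eq_span, hS, coe_top, Set.image_univ]

theorem linearIndepOn_image_and_injOn {T : Finset G}
    (hT : closure (T : Set G) = ⊤) (hf : Function.Surjective f)
    (hcard : T.card ≤ Module.finrank ℤ M) [DecidableEq M] :
    LinearIndepOn ℤ id (T.image (toAdd ∘ f) : Set M) ∧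
      Submodule.span ℤ (T.image (toAdd ∘ f) : Set M) = ⊤ ∧ Set.InjOn f T := by
  have hspan : Submodule.span ℤ (T.image (toAdd ∘ f) : Set M) = ⊤ := by
    rw [Finset.coe_image, ← SetLike.coe_set_eq, ← range_eq_span_of_closure_eq_top f hT,
      Submodule.top_coe, Set.range_eq_univ]
    exact toAdd.surjective.comp hf
  have hind : LinearIndepOn ℤ id (T.image (toAdd ∘ f) : Set M) := by
    refine linearIndependent_of_top_le_span_of_card_le_finrank
      (b := ((↑) : (T.image (toAdd ∘ f) : Set M) → M)) (by rw [Subtype.range_coe, hspan]) ?_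
    simpa using (Finset.card_image_le).trans hcard
  refine ⟨hind, hspan, fun a ha b hb hab => ?_⟩
  have hcard_eq : (T.image (toAdd ∘ f)).card = T.card := by
    refine le_antisymm Finset.card_image_le (hcard.trans ?_)
    rw [← finrank_span_finset_eq_card hind, hspan, finrank_top]
  exact Finset.card_image_iff.mp hcard_eq ha hb (congrArg toAdd hab)

theorem closure_eq_top_of_range_subset_span [Group.IsNilpotent G] (hker : f.ker ≤ commutator G)
    {S : Set G} (hS : Set.range (toAdd ∘ f) ⊆ Submodule.span ℤ (toAdd ∘ f '' S)) :
    closure S = ⊤ := by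
  refine eq_top_of_sup_commutator_eq_top (eq_top_iff.2 fun g _ => ?_)
  obtain ⟨k, hk, hkg⟩ : toAdd (f g) ∈ toAdd ∘ f '' closure S := by
    rw [image_closure_eq_span]
    exact hS ⟨g, rfl⟩
  have hkg' : k⁻¹ * g ∈ f.ker := by simp [MonoidHom.mem_ker, ← toAdd.injective hkg]
  simpa using mul_mem_sup hk (hker hkg')

theorem exists_finset_closure_eq_top_card_eq [Group.IsNilpotent G]
    (hker : f.ker ≤ commutator G) {ι : Type*} (q : ι → G) (hq : Set.InjOn f (Set.range q))
    {B : Finset M} (hqB : ∀ i, toAdd (f (q i)) ∈ B)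
    (hspan : (Submodule.span ℤ (B : Set M) : Set M) = Set.range (toAdd ∘ f)) :
    ∃ T : Finset G, (∀ i, q i ∈ T) ∧ closure (T : Set G) = ⊤ ∧ T.card = B.card := by
  classical
  have : Nonempty G := ⟨1⟩
  have hB : (B : Set M) ⊆ Set.range (toAdd ∘ f) := hspan ▸ Submodule.subset_span
  have hfq : Function.FactorsThrough q (toAdd ∘ f ∘ q) := fun i j hij =>
    hq ⟨i, rfl⟩ ⟨j, rfl⟩ (toAdd.injective hij)
  set lift := Function.extend (toAdd ∘ f ∘ q) q (Function.invFun (toAdd ∘ f))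
  have hlift : ∀ w ∈ Set.range (toAdd ∘ f), toAdd (f (lift w)) = w := by
    intro w hw
    by_cases h : ∃ i, toAdd (f (q i)) = w
    · obtain ⟨i, rfl⟩ := h
      exact congrArg (toAdd ∘ f) (hfq.extend_apply _ i)
    · exact (congrArg (toAdd ∘ f) (Function.extend_apply' _ _ _ h)).trans (Function.invFun_eq hw)
  have himage : toAdd ∘ f '' (B.image lift : Set G) = B := by
    rw [Finset.coe_image, Set.image_image]
    exact (Set.image_congr fun w hw => hlift w (hB hw)).trans (Set.image_id _)
  refine ⟨B.image lift, fun i => Finset.mem_image.2 ⟨_, hqB i, hfq.extend_apply _ i⟩,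
    closure_eq_top_of_range_subset_span f hker (by rw [himage, ← hspan]),
    Finset.card_image_of_injOn fun v hv w hw h => ?_⟩
  rw [← hlift v (hB hv), ← hlift w (hB hw), h]

end AbelianImage

section FreeGroup
open Subgroup Multiplicative

theorem closure_range_comp_eq_top {G H ι : Type*} [Group G] [Group H] {f : G →* H}
    (hf : Function.Surjective f) {v : ι → G} (hv : closure (Set.range v) = ⊤) :
    closure (Set.range (f ∘ v)) = ⊤ := by
  rw [Set.range_comp, ← MonoidHom.map_closure, hv, map_top_of_surjective f hf]

def NilpotentQuot.map (t : ℕ) {G H : Type*} [Group G] [Group H] (f : G →* H) :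
    NilpotentQuot t G →* NilpotentQuot t H :=
  QuotientGroup.map _ _ f <| map_le_iff_le_comap.mp <|
    (map_lowerCentralSeries _ f t).trans_le (lowerCentralSeries_mono t le_top)

theorem NilpotentQuot.map_injective_of_leftInverse (t : ℕ) {G H : Type*} [Group G] [Group H]
    {f : G →* H} {g : H →* G} (h : Function.LeftInverse g f) :
    Function.Injective (NilpotentQuot.map t f) :=
  Function.LeftInverse.injective (g := NilpotentQuot.map t g) fun q =>
    QuotientGroup.induction_on q fun x => congrArg QuotientGroup.mk (h x)

variable {r l t : ℕ}

def hatGenerator (i : {i : Fin r // (i : ℕ) < l}) : hatSubgroup r l :=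
  ⟨FreeGroup.of i, subset_closure ⟨i, i.2, rfl⟩⟩

theorem closure_range_hatGenerator :
    closure (Set.range (hatGenerator (r := r) (l := l))) = ⊤ := by
  have : Set.range hatGenerator =
      ((↑) ⁻¹' (FreeGroup.of '' {i : Fin r | (i : ℕ) < l}) : Set (hatSubgroup r l)) := by
    ext ⟨g, hg⟩
    simp [hatGenerator, Subtype.ext_iff, eq_comm]
  rw [this]
  exact closure_closure_coe_preimage

def hatRetraction : FreeGroup (Fin r) →* hatSubgroup r l :=
  FreeGroup.lift fun i => if h : (i : ℕ) < l then hatGenerator ⟨i, h⟩ else 1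

theorem hatRetraction_leftInverse :
    Function.LeftInverse (hatRetraction (r := r) (l := l)) (hatSubgroup r l).subtype := by
  have : hatRetraction.comp (hatSubgroup r l).subtype = MonoidHom.id _ :=
    MonoidHom.eq_of_eqOn_dense closure_range_hatGenerator <| by
      rintro _ ⟨⟨i, hi⟩, rfl⟩
      simp [hatRetraction, hatGenerator, hi]
  exact DFunLike.congr_fun this

def FreeGroup.exponentSums : FreeGroup (Fin r) →* Multiplicative (Fin r → ℤ) :=
  FreeGroup.lift fun i => ofAdd (Pi.single i 1)

def NilpotentQuot.exponentSums (ht : 1 ≤ t) :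
    NilpotentQuot t (FreeGroup (Fin r)) →* Multiplicative (Fin r → ℤ) :=
  QuotientGroup.lift _ FreeGroup.exponentSums <|
    (Subgroup.lowerCentralSeries_antitone _ ht).trans (Abelianization.commutator_subset_ker _)

theorem NilpotentQuot.exponentSums_surjective (ht : 1 ≤ t) :
    Function.Surjective (NilpotentQuot.exponentSums (r := r) ht) := by
  have hrange := range_eq_span_of_closure_eq_top (NilpotentQuot.exponentSums (r := r) ht)
    (closure_range_comp_eq_top (QuotientGroup.mk'_surjective _) (FreeGroup.closure_range_of _))
  have hgen : (toAdd ∘ NilpotentQuot.exponentSums ht) ∘ QuotientGroup.mk' _ ∘ FreeGroup.of =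
      Pi.basisFun ℤ (Fin r) := by
    ext1 i
    simp [NilpotentQuot.exponentSums, FreeGroup.exponentSums]
  rw [← Set.range_comp, hgen, (Pi.basisFun ℤ (Fin r)).span_eq, Submodule.top_coe,
    Set.range_eq_univ] at hrange
  exact fun w => (hrange w.toAdd).imp fun _ h => toAdd.injective h

theorem finrank_spanSubset_lt (hlr : l ≤ r) :
    Module.finrank ℤ (Pi.spanSubset ℤ {i : Fin r | (i : ℕ) < l}) = l := by
  rw [Pi.dim_spanSubset, Set.ncard_eq_toFinset_card', Set.toFinset_ofPred, Fin.card_filter_val_lt,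
    min_eq_right hlr]

def hatExponentSums (ht : 1 ≤ t) :
    NilpotentQuot t (hatSubgroup r l) →* Multiplicative (Fin r → ℤ) :=
  (NilpotentQuot.exponentSums ht).comp (NilpotentQuot.map t (hatSubgroup r l).subtype)

theorem hatExponentSums_mk_hatGenerator (ht : 1 ≤ t) (i : {i : Fin r // (i : ℕ) < l}) :
    hatExponentSums ht (QuotientGroup.mk (hatGenerator i)) = ofAdd (Pi.single (i : Fin r) 1) := by
  simp [hatExponentSums, NilpotentQuot.map, NilpotentQuot.exponentSums, FreeGroup.exponentSums,
    hatGenerator]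

theorem closure_range_mk_hatGenerator :
    closure (Set.range fun i => (QuotientGroup.mk (hatGenerator i) :
      NilpotentQuot t (hatSubgroup r l))) = ⊤ :=
  closure_range_comp_eq_top (QuotientGroup.mk'_surjective _) closure_range_hatGenerator

theorem range_hatExponentSums (ht : 1 ≤ t) :
    Set.range (toAdd ∘ hatExponentSums (r := r) (l := l) ht) =
      Pi.spanSubset ℤ {i : Fin r | (i : ℕ) < l} := by
  rw [range_eq_span_of_closure_eq_top _ closure_range_mk_hatGenerator, ← Set.range_comp,
    Pi.spanSubset, Set.image_eq_range]
  congr 2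
  ext1 i
  simp [hatExponentSums_mk_hatGenerator]

theorem ker_hatExponentSums_le (ht : 1 ≤ t) :
    (hatExponentSums (r := r) (l := l) ht).ker ≤ commutator _ := by
  let ψ : Multiplicative (Fin r → ℤ) →* Abelianization (NilpotentQuot t (hatSubgroup r l)) :=
    AddMonoidHom.toMultiplicativeLeft (Fintype.linearCombination ℤ fun j : Fin r =>
      if h : (j : ℕ) < l then Additive.ofMul (Abelianization.of (QuotientGroup.mk
        (hatGenerator ⟨j, h⟩))) else 0).toAddMonoidHom
  have hψ : ψ.comp (hatExponentSums ht) = Abelianization.of :=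
    MonoidHom.eq_of_eqOn_dense closure_range_mk_hatGenerator <| by
      rintro _ ⟨⟨i, hi⟩, rfl⟩
      simp [ψ, hatExponentSums_mk_hatGenerator, hi]
  intro g hg
  rw [MonoidHom.mem_ker] at hg
  rw [← Abelianization.ker_of, MonoidHom.mem_ker, ← hψ, MonoidHom.comp_apply, hg, map_one]

end FreeGroup

theorem stmt3_general (t : ℕ) (ht : 1 ≤ t) (r l k : ℕ) (hlr : l ≤ r - 1)
    (x : Fin k → FreeGroup (Fin r)) (hx : ∀ i, x i ∈ hatSubgroup r l)
    (hprim : ∃ T : Finset (NilpotentQuot t (FreeGroup (Fin r))),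
      (∀ i, (QuotientGroup.mk (x i) : NilpotentQuot t (FreeGroup (Fin r))) ∈ T) ∧
        Subgroup.closure (T : Set (NilpotentQuot t (FreeGroup (Fin r)))) = ⊤ ∧ T.card = r) :
    ∃ T : Finset (NilpotentQuot t (hatSubgroup r l)),
      (∀ i, (QuotientGroup.mk (⟨x i, hx i⟩ : hatSubgroup r l) :
          NilpotentQuot t (hatSubgroup r l)) ∈ T) ∧
        Subgroup.closure (T : Set (NilpotentQuot t (hatSubgroup r l))) = ⊤ ∧ T.card = l := by
  classical
  obtain ⟨T, hxT, hTgen, hTcard⟩ := hprim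
  set e := NilpotentQuot.exponentSums (r := r) ht
  set α := hatExponentSums (r := r) (l := l) ht
  set q : Fin k → NilpotentQuot t (hatSubgroup r l) := fun i => QuotientGroup.mk ⟨x i, hx i⟩
  set W := Pi.spanSubset ℤ {i : Fin r | (i : ℕ) < l}
  have hrange : Set.range (Multiplicative.toAdd ∘ α) = W := range_hatExponentSums ht
  obtain ⟨hind, hspan, hinj⟩ := linearIndepOn_image_and_injOn e hTgen
    (NilpotentQuot.exponentSums_surjective ht) (by simp [hTcard])
  have hαq : Set.InjOn α (Set.range q) :=
    hinj.comp (NilpotentQuot.map_injective_of_leftInverse t hatRetraction_leftInverse).injOn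
      (by rintro _ ⟨i, rfl⟩; exact hxT i)
  have hqB₀ : Finset.univ.image (Multiplicative.toAdd ∘ α ∘ q) ⊆
      T.image (Multiplicative.toAdd ∘ e) :=
    Finset.image_subset_iff.2 fun i _ => Finset.mem_image_of_mem _ (hxT i)
  have hqW : ↑(Finset.univ.image (Multiplicative.toAdd ∘ α ∘ q)) ⊆
      (W : Set (Fin r → ℤ)) := by
    rw [← hrange, Finset.coe_image, Finset.coe_univ, Set.image_univ]
    exact Set.range_comp_subset_range q (Multiplicative.toAdd ∘ α)
  obtain ⟨B, hqB, hBind, hBspan⟩ := exists_linearIndepOn_superset_span_eq hind hspan hqB₀ hqW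
  obtain ⟨T', hqT', hT'gen, hT'card⟩ := exists_finset_closure_eq_top_card_eq α
    (ker_hatExponentSums_le ht) q hαq
    (fun i => hqB (Finset.mem_image_of_mem _ (Finset.mem_univ i)))
    (by rw [hBspan, hrange])
  refine ⟨T', hqT', hT'gen, ?_⟩
  rw [hT'card, ← finrank_span_finset_eq_card hBind, hBspan,
    finrank_spanSubset_lt (hlr.trans (Nat.sub_le r 1))]

theorem stmt3 (t : ℕ) (ht : 1 ≤ t) (r l k : ℕ) (hr : 2 ≤ r) (hl : 1 ≤ l) (hlr : l ≤ r - 1)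
    (x : Fin k → FreeGroup (Fin r)) (hx : ∀ i, x i ∈ hatSubgroup r l)
    (hprim : ∃ T : Finset (NilpotentQuot t (FreeGroup (Fin r))),
      (∀ i, (QuotientGroup.mk (x i) : NilpotentQuot t (FreeGroup (Fin r))) ∈ T) ∧
        Subgroup.closure (T : Set (NilpotentQuot t (FreeGroup (Fin r)))) = ⊤ ∧ T.card = r) :
    ∃ T : Finset (NilpotentQuot t (hatSubgroup r l)),
      (∀ i, (QuotientGroup.mk (⟨x i, hx i⟩ : hatSubgroup r l) :
          NilpotentQuot t (hatSubgroup r l)) ∈ T) ∧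
        Subgroup.closure (T : Set (NilpotentQuot t (hatSubgroup r l))) = ⊤ ∧ T.card = l :=
  stmt3_general t ht r l k hlr x hx hprim
end

section
/- Let n > 0, r ≥ 2 and 1 ≤ l ≤ r-1. Identify (ℤ/nℤ)^l with the submodule of (ℤ/nℤ)^r consisting of vectors whose last r-l coordinates are zero. Suppose v_1, ..., v_k ∈ (ℤ/nℤ)^l ⊆ (ℤ/nℤ)^r are vectors that can be extended to a ℤ/nℤ-module basis of (ℤ/nℤ)^r. Then v_1, ..., v_k (viewed in (ℤ/nℤ)^l) can be extended to a ℤ/nℤ-module basis of (ℤ/nℤ)^l. -/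
/-!
Let `N` be the span of the given basis vectors of `(ℤ/nℤ)^r`. It lies in `(ℤ/nℤ)^l`, and by the
modular law the span of the remaining basis vectors meets `(ℤ/nℤ)^l` in a complement `Q` of `N`
there. `Q` is finite projective, and `N ⊕ Q ≅ (ℤ/nℤ)^l` shows that `Q` has the same rank modulo
every maximal ideal. Since `ℤ/nℤ` is semilocal this makes `Q` free (Stacks 02M9), and a basis of
`Q` together with the given vectors is a basis of `(ℤ/nℤ)^l`.
-/

open Module Submodule

section

variable {R M : Type*} [CommRing R] [AddCommGroup M] [Module R M]

theorem Module.free_of_isCompl [Finite (MaximalSpectrum R)] [Module.Free R M] [Module.Finite R M]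
    {N Q : Submodule R M} (h : IsCompl N Q) [Module.Free R N] : Module.Free R Q := by
  have : Module.Finite R N := .of_surjective _ (projectionOnto_surjective h)
  have : Module.Finite R Q := .of_surjective _ (projectionOnto_surjective h.symm)
  have : Module.Projective R Q := .of_split Q.subtype (projectionOnto Q N h.symm) (by ext; simp)
  refine free_of_flat_of_finrank_eq R Q (finrank R M - finrank R N) fun P => ?_
  let K := R ⧸ P.1
  let : Field K := Ideal.Quotient.field P.1
  have : Nontrivial R := (Ideal.Quotient.mk_surjective (I := P.1)).nontrivial
  have hsplit := ((prodEquivOfIsCompl N Q h).symm.baseChange R K _ _ ≪≫ₗ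
    TensorProduct.prodRight R K K N Q).finrank_eq
  rw [finrank_prod, finrank_baseChange, finrank_baseChange] at hsplit
  rw [hsplit, Nat.add_sub_cancel_left]

variable [Finite (MaximalSpectrum R)] [Nontrivial R] {ι κ : Type*}

theorem Submodule.exists_basis_extending_of_isCompl [Module.Finite R M] (e : Basis ι R M)
    {N Q : Submodule R M} (h : IsCompl N Q) (bN : Basis κ R N) :
    ∃ c : Basis ι R M, ∀ k, (bN k : M) ∈ Set.range c := by
  have := Module.Free.of_basis e
  have := Module.Free.of_basis bN
  have := Module.free_of_isCompl h
  let c₀ := (bN.prod (Free.chooseBasis R Q)).map (prodEquivOfIsCompl N Q h)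
  exact ⟨c₀.reindex (c₀.indexEquiv e), fun k => ⟨c₀.indexEquiv e (.inl k), by simp [c₀]⟩⟩

theorem Module.Basis.exists_basis_of_image_subset (b : Basis κ R M) {L : Submodule R M}
    [Module.Finite R L] (e : Basis ι R L) {J : Set κ} (hJ : b '' J ⊆ L) :
    ∃ c : Basis ι R L, ∀ j ∈ J, b j ∈ Set.range fun i => (c i : M) := by
  have hNC := b.linearIndependent.isCompl_span_image b.span_eq (isCompl_compl (x := J))
  have hNL : span R (b '' J) ≤ L := span_le.mpr hJ
  let bN : Basis J R ((span R (b '' J)).comap L.subtype) :=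
    ((Basis.span (b.linearIndependent.comp _ Subtype.val_injective)).map
      (LinearEquiv.ofEq _ _ (by rw [Set.range_comp, Subtype.range_coe]))).map
      (comapSubtypeEquivOfLe hNL).symm
  obtain ⟨c, hc⟩ :=
    exists_basis_extending_of_isCompl e (isCompl_comap_subtype_of_isCompl_of_le hNC hNL) bN
  refine ⟨c, fun j hj => ?_⟩
  obtain ⟨i, hi⟩ := hc ⟨j, hj⟩
  exact ⟨i, by simp [hi, bN]⟩

theorem Module.Basis.exists_basis_of_image_subset_range {F : Type*} [AddCommGroup F]
    [Module R F] [Module.Finite R F] (b : Basis κ R M) {f : F →ₗ[R] M}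
    (hf : Function.Injective f) (e : Basis ι R F) {J : Set κ} (hJ : b '' J ⊆ Set.range f) :
    ∃ c : Basis ι R F, ∀ j ∈ J, b j ∈ Set.range (f ∘ c) := by
  let φ := LinearEquiv.ofInjective f hf
  have : Module.Finite R (LinearMap.range f) := .equiv φ
  obtain ⟨c, hc⟩ := b.exists_basis_of_image_subset (e.map φ) (L := LinearMap.range f) hJ
  refine ⟨c.map φ.symm, fun j hj => ?_⟩
  obtain ⟨i, hi⟩ := hc j hj
  exact ⟨i, by simp [φ, ← hi]⟩

end

theorem stmt11_general (n : ℕ) (hn : 0 < n) (r l k : ℕ) (hl : 1 ≤ l) (hlr : l ≤ r - 1)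
    (v : Fin k → (Fin r → ZMod n))
    (hzero : ∀ i, ∀ j : Fin r, l ≤ (j : ℕ) → v i j = 0)
    (hext : ∃ b : Module.Basis (Fin r) (ZMod n) (Fin r → ZMod n), ∀ i, v i ∈ Set.range ⇑b) :
    ∃ b : Module.Basis (Fin l) (ZMod n) (Fin l → ZMod n),
      ∀ i, (fun j : Fin l => v i (Fin.castLE (le_trans hlr (Nat.sub_le r 1)) j))
        ∈ Set.range ⇑b := by
  rcases subsingleton_or_nontrivial (ZMod n) with _ | _
  · exact ⟨Pi.basisFun _ _, fun i => ⟨⟨0, hl⟩, Subsingleton.elim _ _⟩⟩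
  have : NeZero n := ⟨hn.ne'⟩
  obtain ⟨b, hb⟩ := hext
  choose f hf using hb
  set s := Fin.castLE (le_trans hlr (Nat.sub_le r 1))
  let ι := Function.ExtendByZero.linearMap (ZMod n) s
  let π := LinearMap.funLeft (ZMod n) (ZMod n) s
  have hπι : ∀ x, π (ι x) = x := fun x => funext ((Fin.castLE_injective _).extend_apply _ _)
  have hv : ∀ i, v i ∈ Set.range ι := by
    refine fun i => ⟨π (v i), funext fun j => ?_⟩
    by_cases hj : (j : ℕ) < l
    · exact (Fin.castLE_injective _).extend_apply _ _ ⟨j, hj⟩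
    · rw [hzero i j (not_lt.mp hj)]
      exact Function.extend_apply' _ _ _ (by rintro ⟨a, rfl⟩; exact hj a.isLt)
  obtain ⟨c, hc⟩ := b.exists_basis_of_image_subset_range (Function.LeftInverse.injective hπι)
    (Pi.basisFun _ _) (J := Set.range f) (by rintro _ ⟨_, ⟨i, rfl⟩, rfl⟩; exact hf i ▸ hv i)
  refine ⟨c, fun i => ?_⟩
  obtain ⟨j, hj⟩ := hc (f i) ⟨i, rfl⟩
  exact ⟨j, (hπι (c j)).symm.trans (congrArg π (hj.trans (hf i)))⟩

theorem stmt11 (n : ℕ) (hn : 0 < n) (r l k : ℕ) (hr : 2 ≤ r) (hl : 1 ≤ l) (hlr : l ≤ r - 1)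
    (v : Fin k → (Fin r → ZMod n))
    (hzero : ∀ i, ∀ j : Fin r, l ≤ (j : ℕ) → v i j = 0)
    (hext : ∃ b : Module.Basis (Fin r) (ZMod n) (Fin r → ZMod n), ∀ i, v i ∈ Set.range ⇑b) :
    ∃ b : Module.Basis (Fin l) (ZMod n) (Fin l → ZMod n),
      ∀ i, (fun j : Fin l => v i (Fin.castLE (le_trans hlr (Nat.sub_le r 1)) j))
        ∈ Set.range ⇑b :=
  stmt11_general n hn r l k hl hlr v hzero hext
end
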